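/- arXiv:0906.2855 — 4 statements merged into one kernel-verified Lean document; each statement's English description precedes it below -/
import Mathlib

section
/- Let X_1,...,X_m be independent Bernoulli(p_i), W their sum, λ_1 = Σ p_i, q_i = 1-p_i, W_i = W - X_i. Define the operator B̂*g(w) = (n*p*q* + (1/2 - p*)(w - λ_1))Δg(w) - (w - λ_1)Θg(w), where n*p*q* = λ_1 - λ_2 and p* = (λ_2 - λ_3)/(λ_1 - λ_2), Δg(w) = g(w+1)-g(w), Θg(w) = (g(w+1)+g(w))/2. Then for any bounded g: ℤ → ℝ, E B̂*g(W) = Σ_{i=1}^m (p* - p_i) p_i² q_i E Δ³g(W_i). -/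
/-!
Write `B̂*g(w) = (λ₁ - λ₂) Δg(w) + (w - λ₁) h(w)` with `h = (1/2 - p*) Δg - Θg`. For a Bernoulli(p)
variable `ξ` independent of `V`, `E f(V + ξ) = E f(V) + p E Δf(V)` and
`E (ξ - p) f(V + ξ) = p (1 - p) E Δf(V)`. Splitting `W - λ₁ = ∑ (Xᵢ - pᵢ)` and using
`Δh = -p* Δ²g - Δg` gives `E B̂*g(W) = ∑ pᵢ qᵢ (pᵢ - p*) E Δ²g(Wᵢ)`. Expanding
`E Δ²g(Wᵢ) = E Δ²g(W) - pᵢ E Δ³g(Wᵢ)`, the coefficient of `E Δ²g(W)` is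
`∑ pᵢ qᵢ (pᵢ - p*) = λ₂ - λ₃ - p* (λ₁ - λ₂)`, which vanishes by the choice of `p*`.
-/

open MeasureTheory ProbabilityTheory Finset
open scoped fwdDiff

lemma abs_fwdDiff_iter_le {M : Type*} [AddCommMonoid M] (h : M) {f : M → ℝ} {C : ℝ}
    (hf : ∀ x, |f x| ≤ C) (n : ℕ) (x : M) : |(Δ_[h] ^[n] f) x| ≤ 2 ^ n * C := by
  induction n generalizing x with
  | zero => simpa using hf x
  | succ n ih =>
    rw [Function.iterate_succ_apply', fwdDiff, pow_succ]
    linarith [abs_sub (Δ_[h] ^[n] f (x + h)) (Δ_[h] ^[n] f x), ih (x + h), ih x]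

lemma fwdDiff_sub_half_shift_add (s : ℝ) (g : ℤ → ℝ) (z : ℤ) :
    Δ_[1] (fun w => (1 / 2 - s) * Δ_[1] g w - (g (w + 1) + g w) / 2) z
      = -s * Δ_[1] ^[2] g z - Δ_[1] g z := by
  simp only [fwdDiff, Function.iterate_succ, Function.iterate_zero, Function.comp_apply, id]
  ring

lemma abs_sub_half_shift_add_le (s : ℝ) {g : ℤ → ℝ} {C : ℝ} (hg : ∀ z, |g z| ≤ C) (z : ℤ) :
    |(1 / 2 - s) * Δ_[1] g z - (g (z + 1) + g z) / 2| ≤ |1 / 2 - s| * (2 * C) + C := by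
  have hΔ : |Δ_[1] g z| ≤ 2 * C := by simpa using abs_fwdDiff_iter_le 1 hg 1 z
  have hΘ : |(g (z + 1) + g z) / 2| ≤ C := by
    rw [abs_div, abs_two, div_le_iff₀ two_pos]
    linarith [abs_add_le (g (z + 1)) (g z), hg (z + 1), hg z]
  calc _ ≤ |(1 / 2 - s) * Δ_[1] g z| + |(g (z + 1) + g z) / 2| := abs_sub _ _
    _ ≤ |1 / 2 - s| * (2 * C) + C := by
      rw [abs_mul]
      gcongr

lemma cast_sum_sub_sum_mul {ι : Type*} (s : Finset ι) (x : ι → ℤ) (p : ι → ℝ) (a : ℝ) :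
    (((∑ i ∈ s, x i : ℤ) : ℝ) - ∑ i ∈ s, p i) * a = ∑ i ∈ s, ((x i : ℝ) - p i) * a := by
  push_cast
  rw [← sum_sub_distrib, sum_mul]

lemma sum_mul_one_sub_mul_sub_eq_zero {ι : Type*} (s : Finset ι) (p : ι → ℝ)
    (h : ∑ i ∈ s, p i ≠ ∑ i ∈ s, p i ^ 2) :
    ∑ i ∈ s, p i * (1 - p i)
      * (p i - (∑ i ∈ s, p i ^ 2 - ∑ i ∈ s, p i ^ 3) / (∑ i ∈ s, p i - ∑ i ∈ s, p i ^ 2)) = 0 := by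
  have hvar : ∑ i ∈ s, p i * (1 - p i) = ∑ i ∈ s, p i - ∑ i ∈ s, p i ^ 2 := by
    rw [← sum_sub_distrib]
    exact sum_congr rfl fun i _ => by ring
  have hskew : ∑ i ∈ s, p i * (1 - p i) * p i = ∑ i ∈ s, p i ^ 2 - ∑ i ∈ s, p i ^ 3 := by
    rw [← sum_sub_distrib]
    exact sum_congr rfl fun i _ => by ring
  rw [sum_congr rfl fun i _ => mul_sub _ (p i) _, sum_sub_distrib, ← sum_mul, hvar, hskew,
    mul_div_cancel₀ _ (sub_ne_zero.mpr h), sub_self]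

section Bernoulli

variable {Ω : Type*} [MeasurableSpace Ω] {μ : Measure Ω}

lemma integrable_comp_of_abs_le {α : Type*} [MeasurableSpace α] [Countable α]
    [MeasurableSingletonClass α] [IsFiniteMeasure μ] {V : Ω → α} (hV : Measurable V)
    {f : α → ℝ} {C : ℝ} (hf : ∀ x, |f x| ≤ C) : Integrable (fun ω => f (V ω)) μ :=
  .of_bound ((measurable_of_countable f).comp hV).aestronglyMeasurable C
    (ae_of_all _ fun ω => hf (V ω))

variable {ξ V : Ω → ℤ} {p : ℝ}

lemma integrable_bernoulli_mul (hξ : Measurable ξ) (h01 : ∀ ω, ξ ω = 0 ∨ ξ ω = 1)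
    {F : Ω → ℝ} (hF : Integrable F μ) : Integrable (fun ω => (ξ ω : ℝ) * F ω) μ :=
  hF.bdd_mul (c := 1) (measurable_of_countable _ |>.comp hξ).aestronglyMeasurable
    (ae_of_all _ fun ω => by rcases h01 ω with h | h <;> simp [h])

lemma integrable_bernoulli_sub_mul (hξ : Measurable ξ) (h01 : ∀ ω, ξ ω = 0 ∨ ξ ω = 1)
    (c : ℝ) {F : Ω → ℝ} (hF : Integrable F μ) :
    Integrable (fun ω => ((ξ ω : ℝ) - c) * F ω) μ := by
  simpa only [sub_mul, Pi.sub_def] using (integrable_bernoulli_mul hξ h01 hF).sub (hF.const_mul c)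

lemma integral_bernoulli (hξ : Measurable ξ) (h01 : ∀ ω, ξ ω = 0 ∨ ξ ω = 1)
    (hp : (μ {ω | ξ ω = 1}).toReal = p) : ∫ ω, (ξ ω : ℝ) ∂μ = p := by
  have hindicator : (fun ω => (ξ ω : ℝ)) = {ω | ξ ω = 1}.indicator 1 := by
    funext ω
    rcases h01 ω with h | h <;> simp [h]
  rw [hindicator, integral_indicator_one (s := {ω | ξ ω = 1}) (hξ (measurableSet_singleton 1)),
    measureReal_def, hp]

lemma integral_bernoulli_mul_comp (hξ : Measurable ξ) (hV : Measurable V)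
    (hindep : IndepFun ξ V μ) (h01 : ∀ ω, ξ ω = 0 ∨ ξ ω = 1)
    (hp : (μ {ω | ξ ω = 1}).toReal = p) (f : ℤ → ℝ) :
    ∫ ω, (ξ ω : ℝ) * f (V ω) ∂μ = p * ∫ ω, f (V ω) ∂μ := by
  rw [← integral_bernoulli hξ h01 hp]
  exact (hindep.comp (measurable_of_countable _) (measurable_of_countable f)
    ).integral_fun_mul_eq_mul_integral
    (measurable_of_countable _ |>.comp hξ).aestronglyMeasurable
    (measurable_of_countable f |>.comp hV).aestronglyMeasurable

variable [IsProbabilityMeasure μ]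

lemma integral_comp_add_bernoulli (hξ : Measurable ξ) (hV : Measurable V)
    (hindep : IndepFun ξ V μ) (h01 : ∀ ω, ξ ω = 0 ∨ ξ ω = 1)
    (hp : (μ {ω | ξ ω = 1}).toReal = p) {f : ℤ → ℝ} {C : ℝ} (hf : ∀ z, |f z| ≤ C) :
    ∫ ω, f (V ω + ξ ω) ∂μ = ∫ ω, f (V ω) ∂μ + p * ∫ ω, Δ_[1] f (V ω) ∂μ := by
  have hjump : ∀ ω, f (V ω + ξ ω) - f (V ω) = (ξ ω : ℝ) * Δ_[1] f (V ω) := fun ω => by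
    rcases h01 ω with h | h <;> simp [h, fwdDiff]
  have hdiff := integral_sub
    (integrable_comp_of_abs_le (μ := μ) (V := fun ω => V ω + ξ ω) (hV.add hξ) hf)
    (integrable_comp_of_abs_le hV hf)
  rw [integral_congr_ae (ae_of_all _ hjump),
    integral_bernoulli_mul_comp hξ hV hindep h01 hp] at hdiff
  linarith

lemma integral_bernoulli_sub_mul_comp_add (hξ : Measurable ξ) (hV : Measurable V)
    (hindep : IndepFun ξ V μ) (h01 : ∀ ω, ξ ω = 0 ∨ ξ ω = 1)
    (hp : (μ {ω | ξ ω = 1}).toReal = p) {f : ℤ → ℝ} {C : ℝ} (hf : ∀ z, |f z| ≤ C) :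
    ∫ ω, ((ξ ω : ℝ) - p) * f (V ω + ξ ω) ∂μ = p * (1 - p) * ∫ ω, Δ_[1] f (V ω) ∂μ := by
  have hf₁ : ∀ z, |f (z + 1)| ≤ C := fun z => hf (z + 1)
  have hsplit : ∀ ω, ((ξ ω : ℝ) - p) * f (V ω + ξ ω)
      = (ξ ω : ℝ) * f (V ω + 1) - p * f (V ω + ξ ω) := fun ω => by
    rcases h01 ω with h | h <;> simp [h, sub_mul]
  have hΔ : ∫ ω, Δ_[1] f (V ω) ∂μ = ∫ ω, f (V ω + 1) ∂μ - ∫ ω, f (V ω) ∂μ :=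
    integral_sub (integrable_comp_of_abs_le hV hf₁) (integrable_comp_of_abs_le hV hf)
  rw [integral_congr_ae (ae_of_all _ hsplit),
    integral_sub (integrable_bernoulli_mul hξ h01 (integrable_comp_of_abs_le hV hf₁))
      ((integrable_comp_of_abs_le (V := fun ω => V ω + ξ ω) (hV.add hξ) hf).const_mul p),
    integral_const_mul, integral_bernoulli_mul_comp hξ hV hindep h01 hp (fun z => f (z + 1)),
    integral_comp_add_bernoulli hξ hV hindep h01 hp hf, hΔ]
  ring

end Bernoulli

section BernoulliSum

variable {Ω ι : Type*} [MeasurableSpace Ω] {μ : Measure Ω} [Fintype ι]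
  {X : ι → Ω → ℤ} {p : ι → ℝ}

lemma ProbabilityTheory.iIndepFun.indepFun_sum_sub (hmeas : ∀ i, Measurable (X i))
    (hind : iIndepFun X μ) (i : ι) : IndepFun (X i) (fun ω => ∑ j, X j ω - X i ω) μ := by
  classical
  convert (hind.indepFun_finsetSum_of_notMem hmeas (notMem_erase i univ)).symm using 1
  funext ω
  rw [Finset.sum_apply, sum_erase_eq_sub (mem_univ i)]

lemma integrable_sum_sub_mean_mul (hmeas : ∀ i, Measurable (X i))
    (h01 : ∀ i ω, X i ω = 0 ∨ X i ω = 1) {F : Ω → ℝ} (hF : Integrable F μ) :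
    Integrable (fun ω => (((∑ j, X j ω : ℤ) : ℝ) - ∑ i, p i) * F ω) μ := by
  simpa only [cast_sum_sub_sum_mul] using
    integrable_finsetSum univ fun i _ => integrable_bernoulli_sub_mul (hmeas i) (h01 i) (p i) hF

variable [IsProbabilityMeasure μ]

lemma integral_comp_sum (hmeas : ∀ i, Measurable (X i)) (hind : iIndepFun X μ)
    (h01 : ∀ i ω, X i ω = 0 ∨ X i ω = 1) (hp : ∀ i, (μ {ω | X i ω = 1}).toReal = p i)
    {f : ℤ → ℝ} {C : ℝ} (hf : ∀ z, |f z| ≤ C) (i : ι) :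
    ∫ ω, f (∑ j, X j ω) ∂μ
      = ∫ ω, f (∑ j, X j ω - X i ω) ∂μ + p i * ∫ ω, Δ_[1] f (∑ j, X j ω - X i ω) ∂μ := by
  simpa using integral_comp_add_bernoulli (hmeas i)
    ((measurable_fun_sum univ fun j _ => hmeas j).sub (hmeas i))
    (hind.indepFun_sum_sub hmeas i) (h01 i) (hp i) hf

lemma integral_bernoulli_sub_mul_comp_sum (hmeas : ∀ i, Measurable (X i))
    (hind : iIndepFun X μ) (h01 : ∀ i ω, X i ω = 0 ∨ X i ω = 1)
    (hp : ∀ i, (μ {ω | X i ω = 1}).toReal = p i) {f : ℤ → ℝ} {C : ℝ} (hf : ∀ z, |f z| ≤ C)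
    (i : ι) :
    ∫ ω, ((X i ω : ℝ) - p i) * f (∑ j, X j ω) ∂μ
      = p i * (1 - p i) * ∫ ω, Δ_[1] f (∑ j, X j ω - X i ω) ∂μ := by
  simpa using integral_bernoulli_sub_mul_comp_add (hmeas i)
    ((measurable_fun_sum univ fun j _ => hmeas j).sub (hmeas i))
    (hind.indepFun_sum_sub hmeas i) (h01 i) (hp i) hf

lemma integral_sum_sub_mean_mul (hmeas : ∀ i, Measurable (X i)) (hind : iIndepFun X μ)
    (h01 : ∀ i ω, X i ω = 0 ∨ X i ω = 1) (hp : ∀ i, (μ {ω | X i ω = 1}).toReal = p i)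
    {f : ℤ → ℝ} {C : ℝ} (hf : ∀ z, |f z| ≤ C) :
    ∫ ω, (((∑ j, X j ω : ℤ) : ℝ) - ∑ i, p i) * f (∑ j, X j ω) ∂μ
      = ∑ i, p i * (1 - p i) * ∫ ω, Δ_[1] f (∑ j, X j ω - X i ω) ∂μ := by
  have hfW : Integrable (fun ω => f (∑ j, X j ω)) μ :=
    integrable_comp_of_abs_le (measurable_fun_sum univ fun j _ => hmeas j) hf
  simp only [cast_sum_sub_sum_mul]
  rw [integral_finsetSum _ fun i _ => integrable_bernoulli_sub_mul (hmeas i) (h01 i) (p i) hfW]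
  exact sum_congr rfl fun i _ => integral_bernoulli_sub_mul_comp_sum hmeas hind h01 hp hf i

theorem integral_steinOperator (hmeas : ∀ i, Measurable (X i)) (hind : iIndepFun X μ)
    (h01 : ∀ i ω, X i ω = 0 ∨ X i ω = 1) (hp : ∀ i, (μ {ω | X i ω = 1}).toReal = p i)
    (s : ℝ) {g : ℤ → ℝ} {C : ℝ} (hg : ∀ z, |g z| ≤ C) :
    ∫ ω, ((∑ i, p i - ∑ i, p i ^ 2 + (1 / 2 - s) * (((∑ j, X j ω : ℤ) : ℝ) - ∑ i, p i))
            * Δ_[1] g (∑ j, X j ω)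
          - (((∑ j, X j ω : ℤ) : ℝ) - ∑ i, p i)
            * (g ((∑ j, X j ω) + 1) + g (∑ j, X j ω)) / 2) ∂μ
      = ∑ i, p i * (1 - p i) * (p i - s) * ∫ ω, Δ_[1] ^[2] g (∑ j, X j ω - X i ω) ∂μ := by
  set h : ℤ → ℝ := fun w => (1 / 2 - s) * Δ_[1] g w - (g (w + 1) + g w) / 2 with hh
  have hW : Measurable fun ω => ∑ j, X j ω := measurable_fun_sum univ fun j _ => hmeas j
  have hΔg : ∀ z, |Δ_[1] g z| ≤ 2 * C := by simpa using abs_fwdDiff_iter_le 1 hg 1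
  have hvar : ∑ i, p i - ∑ i, p i ^ 2 = ∑ i, p i * (1 - p i) := by
    rw [← sum_sub_distrib]
    exact sum_congr rfl fun i _ => by ring
  have hsplit : ∀ ω, ((∑ i, p i - ∑ i, p i ^ 2
        + (1 / 2 - s) * (((∑ j, X j ω : ℤ) : ℝ) - ∑ i, p i)) * Δ_[1] g (∑ j, X j ω)
      - (((∑ j, X j ω : ℤ) : ℝ) - ∑ i, p i) * (g ((∑ j, X j ω) + 1) + g (∑ j, X j ω)) / 2)
      = (∑ i, p i * (1 - p i)) * Δ_[1] g (∑ j, X j ω)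
        + (((∑ j, X j ω : ℤ) : ℝ) - ∑ i, p i) * h (∑ j, X j ω) := fun ω => by
    rw [← hvar, hh]
    ring
  have hΔh : ∀ i, ∫ ω, Δ_[1] h (∑ j, X j ω - X i ω) ∂μ
      = -s * ∫ ω, Δ_[1] ^[2] g (∑ j, X j ω - X i ω) ∂μ
        - ∫ ω, Δ_[1] g (∑ j, X j ω - X i ω) ∂μ := fun i => by
    have hWi : Measurable fun ω => ∑ j, X j ω - X i ω := hW.sub (hmeas i)
    simp only [hh, fwdDiff_sub_half_shift_add]
    rw [integral_sub ((integrable_comp_of_abs_le hWi (abs_fwdDiff_iter_le 1 hg 2)).const_mul _)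
      (integrable_comp_of_abs_le hWi hΔg), integral_const_mul]
  rw [integral_congr_ae (ae_of_all _ hsplit),
    integral_add ((integrable_comp_of_abs_le hW hΔg).const_mul _)
      (integrable_sum_sub_mean_mul hmeas h01
        (integrable_comp_of_abs_le hW (abs_sub_half_shift_add_le s hg))),
    integral_const_mul, integral_sum_sub_mean_mul hmeas hind h01 hp
      (abs_sub_half_shift_add_le s hg), sum_mul, ← sum_add_distrib]
  refine sum_congr rfl fun i _ => ?_
  have hΔΔ : Δ_[1] (Δ_[1] g) = Δ_[1] ^[2] g := rfl
  rw [hΔh i, integral_comp_sum hmeas hind h01 hp hΔg i, hΔΔ]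
  ring

lemma sum_mul_integral_fwdDiff_two (hmeas : ∀ i, Measurable (X i)) (hind : iIndepFun X μ)
    (h01 : ∀ i ω, X i ω = 0 ∨ X i ω = 1) (hp : ∀ i, (μ {ω | X i ω = 1}).toReal = p i)
    {s : ℝ} (hs : ∑ i, p i * (1 - p i) * (p i - s) = 0) {g : ℤ → ℝ} {C : ℝ}
    (hg : ∀ z, |g z| ≤ C) :
    ∑ i, p i * (1 - p i) * (p i - s) * ∫ ω, Δ_[1] ^[2] g (∑ j, X j ω - X i ω) ∂μ
      = ∑ i, (s - p i) * p i ^ 2 * (1 - p i)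
          * ∫ ω, Δ_[1] ^[3] g (∑ j, X j ω - X i ω) ∂μ := by
  have hexpand : ∀ i, ∫ ω, Δ_[1] ^[2] g (∑ j, X j ω - X i ω) ∂μ
      = ∫ ω, Δ_[1] ^[2] g (∑ j, X j ω) ∂μ - p i * ∫ ω, Δ_[1] ^[3] g (∑ j, X j ω - X i ω) ∂μ :=
    fun i => by
      rw [integral_comp_sum hmeas hind h01 hp (abs_fwdDiff_iter_le 1 hg 2) i,
        ← Function.iterate_succ_apply' (fwdDiff 1)]
      ring
  calc _ = ∑ i, (p i * (1 - p i) * (p i - s) * ∫ ω, Δ_[1] ^[2] g (∑ j, X j ω) ∂μ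
          + (s - p i) * p i ^ 2 * (1 - p i) * ∫ ω, Δ_[1] ^[3] g (∑ j, X j ω - X i ω) ∂μ) :=
        sum_congr rfl fun i _ => by rw [hexpand]; ring
    _ = _ := by rw [sum_add_distrib, ← sum_mul, hs, zero_mul, zero_add]

end BernoulliSum

theorem stmt_8_general {Ω : Type*} [MeasureSpace Ω] [IsProbabilityMeasure (ℙ : Measure Ω)]
    (m : ℕ) (X : Fin m → Ω → ℤ) (p : Fin m → ℝ)
    (hmeas : ∀ i, Measurable (X i))
    (hind : iIndepFun X ℙ)
    (h01 : ∀ i ω, X i ω = 0 ∨ X i ω = 1)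
    (hp : ∀ i, (ℙ {ω | X i ω = 1}).toReal = p i)
    (l1 l2 l3 : ℝ)
    (hl1 : l1 = ∑ i, p i) (hl2 : l2 = ∑ i, (p i) ^ 2) (hl3 : l3 = ∑ i, (p i) ^ 3)
    (h12 : l1 > l2)
    (pstar : ℝ) (hps : pstar = (l2 - l3) / (l1 - l2))
    (g : ℤ → ℝ) (hb : ∃ C, ∀ z, |g z| ≤ C) :
    ∫ ω, ((l1 - l2 + (1 / 2 - pstar) * (((∑ j, X j ω : ℤ) : ℝ) - l1))
            * (g ((∑ j, X j ω) + 1) - g (∑ j, X j ω))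
          - (((∑ j, X j ω : ℤ) : ℝ) - l1)
            * (g ((∑ j, X j ω) + 1) + g (∑ j, X j ω)) / 2) ∂ℙ
      = ∑ i, (pstar - p i) * (p i) ^ 2 * (1 - p i) *
          ∫ ω, (g ((∑ j, X j ω) - X i ω + 3) - 3 * g ((∑ j, X j ω) - X i ω + 2)
              + 3 * g ((∑ j, X j ω) - X i ω + 1) - g ((∑ j, X j ω) - X i ω)) ∂ℙ := by
  obtain ⟨C, hC⟩ := hb
  subst hl1 hl2 hl3 hps
  have hΔ3 : ∀ z, g (z + 3) - 3 * g (z + 2) + 3 * g (z + 1) - g z = Δ_[1] ^[3] g z := by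
    intro z
    simp only [fwdDiff, Function.iterate_succ, Function.iterate_zero, Function.comp_apply, id]
    ring_nf
  simp only [hΔ3]
  rw [← sum_mul_integral_fwdDiff_two hmeas hind h01 hp
      (sum_mul_one_sub_mul_sub_eq_zero _ p h12.ne') hC,
    ← integral_steinOperator hmeas hind h01 hp _ hC]
  rfl

theorem stmt_8 {Ω : Type*} [MeasureSpace Ω] [IsProbabilityMeasure (ℙ : Measure Ω)]
    (m : ℕ) (X : Fin m → Ω → ℤ) (p : Fin m → ℝ)
    (hmeas : ∀ i, Measurable (X i))
    (hind : iIndepFun X ℙ)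
    (h01 : ∀ i ω, X i ω = 0 ∨ X i ω = 1)
    (hp : ∀ i, (ℙ {ω | X i ω = 1}).toReal = p i)
    (hp01 : ∀ i, p i ∈ Set.Ioo (0 : ℝ) 1)
    (l1 l2 l3 : ℝ)
    (hl1 : l1 = ∑ i, p i) (hl2 : l2 = ∑ i, (p i) ^ 2) (hl3 : l3 = ∑ i, (p i) ^ 3)
    (h12 : l1 > l2) (h23 : l2 > l3)
    (pstar : ℝ) (hps : pstar = (l2 - l3) / (l1 - l2))
    (g : ℤ → ℝ) (hb : ∃ C, ∀ z, |g z| ≤ C) :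
    ∫ ω, ((l1 - l2 + (1 / 2 - pstar) * (((∑ j, X j ω : ℤ) : ℝ) - l1))
            * (g ((∑ j, X j ω) + 1) - g (∑ j, X j ω))
          - (((∑ j, X j ω : ℤ) : ℝ) - l1)
            * (g ((∑ j, X j ω) + 1) + g (∑ j, X j ω)) / 2) ∂ℙ
      = ∑ i, (pstar - p i) * (p i) ^ 2 * (1 - p i) *
          ∫ ω, (g ((∑ j, X j ω) - X i ω + 3) - 3 * g ((∑ j, X j ω) - X i ω + 2)
              + 3 * g ((∑ j, X j ω) - X i ω + 1) - g ((∑ j, X j ω) - X i ω)) ∂ℙ :=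
  stmt_8_general m X p hmeas hind h01 hp l1 l2 l3 hl1 hl2 hl3 h12 pstar hps g hb
end

section
/- Let X_1,...,X_m be independent Bernoulli(p_i), W their sum, and g: ℤ → ℝ bounded. Then E[(W - λ_1)Θg(W)] = Σ_{i=1}^m p_i q_i E[Δg(W)] + Σ_{i=1}^m p_i q_i (1/2 - p_i) E[Δ²g(W_i)], where W_i = W - X_i, Δg(w)=g(w+1)-g(w), Θg(w)=(g(w+1)+g(w))/2, λ_1 = Σ p_i, q_i = 1-p_i. -/
open MeasureTheory ProbabilityTheory Finset

lemma stmt_10_aux {Ω : Type*} [MeasureSpace Ω] [IsProbabilityMeasure (ℙ : Measure Ω)]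
    (ξ V : Ω → ℤ) (hξ : Measurable ξ) (hV : Measurable V)
    (hindep : IndepFun ξ V ℙ) (h01 : ∀ ω, ξ ω = 0 ∨ ξ ω = 1)
    (pi : ℝ) (hpi : (ℙ {ω | ξ ω = 1}).toReal = pi)
    (g : ℤ → ℝ) (C : ℝ) (hC : ∀ z, |g z| ≤ C) :
    ∫ ω, ((ξ ω : ℝ) - pi) * ((g (V ω + ξ ω + 1) + g (V ω + ξ ω)) / 2) ∂ℙ
      = pi * (1 - pi) * ∫ ω, (g (V ω + ξ ω + 1) - g (V ω + ξ ω)) ∂ℙ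
        + pi * (1 - pi) * (1 / 2 - pi) *
          ∫ ω, (g (V ω + 2) - 2 * g (V ω + 1) + g (V ω)) ∂ℙ := by
  have hC0 : 0 ≤ C := (abs_nonneg _).trans (hC 0)
  have mZ : ∀ f : ℤ → ℝ, Measurable f := fun f => measurable_from_top
  have hInt : ∀ F : Ω → ℝ, Measurable F → ∀ D : ℝ, (∀ ω, |F ω| ≤ D) → Integrable F ℙ :=
    fun F hF D h => ⟨hF.aestronglyMeasurable,
      MeasureTheory.HasFiniteIntegral.of_bounded (C := D) (Filter.Eventually.of_forall h)⟩
  set ind : ℤ → ℝ := fun x => if x = 1 then 1 else 0 with hind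
  set phi0 : ℤ → ℝ := fun x => (if x = 1 then 1 else 0) - pi with hphi0
  set Th : ℤ → ℝ := fun w => (g (w + 1) + g w) / 2 with hTh
  set DT : ℤ → ℝ := fun w => (g (w + 2) - g w) / 2 with hDT
  set D1 : ℤ → ℝ := fun w => g (w + 1) - g w with hD1
  set D2 : ℤ → ℝ := fun w => g (w + 2) - 2 * g (w + 1) + g w with hD2
  have bind : ∀ x, |ind x| ≤ 1 := by
    intro x; rw [hind]; dsimp only; split <;> simp
  have bphi0 : ∀ x, |phi0 x| ≤ 1 + |pi| := by
    intro x; rw [hphi0]; dsimp only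
    have : |(if x = 1 then (1:ℝ) else 0)| ≤ 1 := by split <;> simp
    calc |(if x = 1 then (1:ℝ) else 0) - pi| ≤ |(if x = 1 then (1:ℝ) else 0)| + |pi| :=
          abs_sub _ _
      _ ≤ 1 + |pi| := by linarith
  have bTh : ∀ w, |Th w| ≤ C := by
    intro w
    have h1 := hC (w + 1); have h2 := hC w
    have : |g (w + 1) + g w| ≤ C + C := (abs_add_le _ _).trans (add_le_add h1 h2)
    rw [hTh]; dsimp only; rw [abs_div, abs_two]; linarith
  have bDT : ∀ w, |DT w| ≤ C := by
    intro w
    have h1 := hC (w + 2); have h2 := hC w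
    have : |g (w + 2) - g w| ≤ C + C := (abs_sub _ _).trans (add_le_add h1 h2)
    rw [hDT]; dsimp only; rw [abs_div, abs_two]; linarith
  have bD1 : ∀ w, |D1 w| ≤ 2 * C := by
    intro w
    have h1 := hC (w + 1); have h2 := hC w
    rw [hD1]; dsimp only
    calc |g (w + 1) - g w| ≤ |g (w+1)| + |g w| := abs_sub _ _
      _ ≤ 2 * C := by linarith
  have bD2 : ∀ w, |D2 w| ≤ 4 * C := by
    intro w
    have h1 := hC (w + 2); have h2 := hC (w + 1); have h3 := hC w
    rw [hD2]; dsimp only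
    calc |g (w + 2) - 2 * g (w + 1) + g w|
        ≤ |g (w + 2) - 2 * g (w + 1)| + |g w| := abs_add_le _ _
      _ ≤ |g (w + 2)| + |2 * g (w + 1)| + |g w| := by
          have := abs_sub (g (w + 2)) (2 * g (w + 1)); linarith
      _ ≤ 4 * C := by rw [abs_mul, abs_two]; linarith
  -- integrability helpers
  have hIntc : ∀ (φ ψ : ℤ → ℝ) (D E : ℝ), (∀ x, |φ x| ≤ D) → (∀ x, |ψ x| ≤ E) →
      Integrable (fun ω => φ (ξ ω) * ψ (V ω)) ℙ := by
    intro φ ψ D E hD hE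
    refine hInt _ (((mZ φ).comp hξ).mul ((mZ ψ).comp hV)) (D * E) fun ω => ?_
    rw [abs_mul]
    have h1 := hD (ξ ω); have h2 := hE (V ω)
    have h0 : (0:ℝ) ≤ D := (abs_nonneg _).trans h1
    exact mul_le_mul h1 h2 (abs_nonneg _) h0
  have hIntV : ∀ (ψ : ℤ → ℝ) (E : ℝ), (∀ x, |ψ x| ≤ E) →
      Integrable (fun ω => ψ (V ω)) ℙ :=
    fun ψ E hE => hInt _ ((mZ ψ).comp hV) E fun ω => hE _
  -- independence product formula
  have hprod : ∀ φ ψ : ℤ → ℝ,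
      ∫ ω, φ (ξ ω) * ψ (V ω) ∂ℙ = (∫ ω, φ (ξ ω) ∂ℙ) * ∫ ω, ψ (V ω) ∂ℙ :=
    fun φ ψ => IndepFun.integral_fun_mul_eq_mul_integral (hindep.comp (mZ φ) (mZ ψ))
      ((mZ φ).comp hξ).aestronglyMeasurable ((mZ ψ).comp hV).aestronglyMeasurable
  -- Bernoulli expectation
  have hEind : ∫ ω, ind (ξ ω) ∂ℙ = pi := by
    have heq : (fun ω => ind (ξ ω))
        = fun ω => Set.indicator {ω | ξ ω = 1} (fun _ => (1:ℝ)) ω := by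
      funext ω
      by_cases h : ξ ω = 1 <;> simp [hind, h, Set.indicator]
    have hs : MeasurableSet {ω | ξ ω = 1} := hξ (measurableSet_singleton 1)
    rw [heq, MeasureTheory.integral_indicator_const (1:ℝ) hs]
    simp [measureReal_def, hpi]
  have hIind : Integrable (fun ω => ind (ξ ω)) ℙ :=
    hInt _ ((mZ ind).comp hξ) 1 fun ω => bind _
  -- step 1 : pointwise decomposition of LHS
  have step1 : (fun ω => ((ξ ω : ℝ) - pi) * ((g (V ω + ξ ω + 1) + g (V ω + ξ ω)) / 2))
      = fun ω => phi0 (ξ ω) * Th (V ω) + (1 - pi) * (ind (ξ ω) * DT (V ω)) := by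
    funext ω
    rcases h01 ω with h | h <;> rw [h] <;> simp [hind, hphi0, hTh, hDT] <;> ring
  -- E[phi0 (ξ)] = 0
  have hzero : ∫ ω, phi0 (ξ ω) ∂ℙ = 0 := by
    have he : (fun ω => phi0 (ξ ω)) = fun ω => ind (ξ ω) - pi := by
      funext ω; rw [hphi0, hind]
    rw [he, MeasureTheory.integral_sub hIind (integrable_const pi), hEind,
      MeasureTheory.integral_const]
    simp
  -- LHS value
  have lhs_eq : ∫ ω, ((ξ ω : ℝ) - pi) * ((g (V ω + ξ ω + 1) + g (V ω + ξ ω)) / 2) ∂ℙ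
      = pi * (1 - pi) * ∫ ω, DT (V ω) ∂ℙ := by
    rw [step1, MeasureTheory.integral_add
        (hIntc phi0 Th (1 + |pi|) C bphi0 bTh)
        ((hIntc ind DT 1 C bind bDT).const_mul (1 - pi))]
    rw [MeasureTheory.integral_const_mul, hprod, hprod, hzero, hEind]
    ring
  -- step 4: first RHS integral
  have step4 : ∫ ω, (g (V ω + ξ ω + 1) - g (V ω + ξ ω)) ∂ℙ
      = (∫ ω, D1 (V ω) ∂ℙ) + pi * ∫ ω, D2 (V ω) ∂ℙ := by
    have heq : (fun ω => g (V ω + ξ ω + 1) - g (V ω + ξ ω))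
        = fun ω => D1 (V ω) + ind (ξ ω) * D2 (V ω) := by
      funext ω
      rcases h01 ω with h | h <;> rw [h] <;> simp [hind, hD1, hD2] <;> ring
    rw [heq, MeasureTheory.integral_add (hIntV D1 (2 * C) bD1)
        (hIntc ind D2 1 (4 * C) bind bD2), hprod, hEind]
  -- step 5: DT = D1 + D2/2
  have step5 : ∫ ω, DT (V ω) ∂ℙ = (∫ ω, D1 (V ω) ∂ℙ) + (1 / 2) * ∫ ω, D2 (V ω) ∂ℙ := by
    have heq : (fun ω => DT (V ω)) = fun ω => D1 (V ω) + (1 / 2) * D2 (V ω) := by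
      funext ω; simp [hDT, hD1, hD2]; ring
    rw [heq, MeasureTheory.integral_add (hIntV D1 (2 * C) bD1)
        ((hIntV D2 (4 * C) bD2).const_mul _), MeasureTheory.integral_const_mul]
  have h2 : ∫ ω, (g (V ω + 2) - 2 * g (V ω + 1) + g (V ω)) ∂ℙ = ∫ ω, D2 (V ω) ∂ℙ := by
    rw [hD2]
  rw [lhs_eq, step4, step5, h2]
  ring



theorem stmt_10 {Ω : Type*} [MeasureSpace Ω] [IsProbabilityMeasure (ℙ : Measure Ω)]
    (m : ℕ) (X : Fin m → Ω → ℤ) (p : Fin m → ℝ)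
    (hmeas : ∀ i, Measurable (X i))
    (hind : iIndepFun X ℙ)
    (h01 : ∀ i ω, X i ω = 0 ∨ X i ω = 1)
    (hp : ∀ i, (ℙ {ω | X i ω = 1}).toReal = p i)
    (l1 : ℝ) (hl1 : l1 = ∑ i, p i)
    (g : ℤ → ℝ) (hb : ∃ C, ∀ z, |g z| ≤ C) :
    ∫ ω, (((∑ j, X j ω : ℤ) : ℝ) - l1)
        * (g ((∑ j, X j ω) + 1) + g (∑ j, X j ω)) / 2 ∂ℙ
      = (∑ i, p i * (1 - p i) *
          ∫ ω, (g ((∑ j, X j ω) + 1) - g (∑ j, X j ω)) ∂ℙ)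
        + ∑ i, p i * (1 - p i) * (1 / 2 - p i) *
          ∫ ω, (g ((∑ j, X j ω) - X i ω + 2) - 2 * g ((∑ j, X j ω) - X i ω + 1)
              + g ((∑ j, X j ω) - X i ω)) ∂ℙ := by
  obtain ⟨C, hC⟩ := hb
  have hC0 : 0 ≤ C := (abs_nonneg _).trans (hC 0)
  have mZ : ∀ f : ℤ → ℝ, Measurable f := fun f => measurable_from_top
  have hInt : ∀ F : Ω → ℝ, Measurable F → ∀ D : ℝ, (∀ ω, |F ω| ≤ D) → Integrable F ℙ :=
    fun F hF D h => ⟨hF.aestronglyMeasurable,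
      MeasureTheory.HasFiniteIntegral.of_bounded (C := D) (Filter.Eventually.of_forall h)⟩
  have hWmeas : Measurable (fun ω => ∑ j, X j ω) :=
    Finset.measurable_sum univ fun j _ => hmeas j
  have hVmeas : ∀ i, Measurable (fun ω => (∑ j, X j ω) - X i ω) :=
    fun i => hWmeas.sub (hmeas i)
  have hIndep : ∀ i, IndepFun (X i) (fun ω => (∑ j, X j ω) - X i ω) ℙ := by
    intro i
    have h := (hind.indepFun_finsetSum_of_notMem hmeas (Finset.notMem_erase i univ)).symm
    have he : (fun ω => (∑ j, X j ω) - X i ω) = ∑ j ∈ univ.erase i, X j := by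
      funext ω
      rw [Finset.sum_apply]
      rw [← Finset.sum_erase_add univ (fun j => X j ω) (Finset.mem_univ i)]
      ring
    rw [he]; exact h
  have key : ∀ i : Fin m,
      ∫ ω, ((X i ω : ℝ) - p i) * ((g ((∑ j, X j ω) + 1) + g (∑ j, X j ω)) / 2) ∂ℙ
        = p i * (1 - p i) * ∫ ω, (g ((∑ j, X j ω) + 1) - g (∑ j, X j ω)) ∂ℙ
          + p i * (1 - p i) * (1 / 2 - p i) *
            ∫ ω, (g ((∑ j, X j ω) - X i ω + 2) - 2 * g ((∑ j, X j ω) - X i ω + 1)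
                + g ((∑ j, X j ω) - X i ω)) ∂ℙ := by
    intro i
    have h := stmt_10_aux (X i) (fun ω => (∑ j, X j ω) - X i ω) (hmeas i) (hVmeas i)
      (hIndep i) (h01 i) (p i) (hp i) g C hC
    have e1 : ∀ ω, (∑ j, X j ω) - X i ω + X i ω = ∑ j, X j ω := fun ω => by ring
    simp only [e1] at h
    exact h
  have intsummand : ∀ i : Fin m, Integrable
      (fun ω => ((X i ω : ℝ) - p i) * ((g ((∑ j, X j ω) + 1) + g (∑ j, X j ω)) / 2)) ℙ := by
    intro i
    refine hInt _ ?_ ((1 + |p i|) * C) ?_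
    · exact ((measurable_from_top.comp (hmeas i) : Measurable fun ω => ((X i ω : ℤ) : ℝ)).sub
        measurable_const).mul ((mZ (fun w => (g (w + 1) + g w) / 2)).comp hWmeas)
    · intro ω
      rw [abs_mul]
      have h1 : |(X i ω : ℝ) - p i| ≤ 1 + |p i| := by
        rcases h01 i ω with h | h <;> rw [h] <;>
          · push_cast
            calc |_| ≤ _ := abs_sub _ _
              _ ≤ 1 + |p i| := by simp
      have h2 : |(g ((∑ j, X j ω) + 1) + g (∑ j, X j ω)) / 2| ≤ C := by
        have ha := hC ((∑ j, X j ω) + 1); have hb := hC (∑ j, X j ω)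
        rw [abs_div, abs_two]
        have : |g ((∑ j, X j ω) + 1) + g (∑ j, X j ω)| ≤ C + C :=
          (abs_add_le _ _).trans (add_le_add ha hb)
        linarith
      exact mul_le_mul h1 h2 (abs_nonneg _) (by positivity)
  have lhseq : ∫ ω, (((∑ j, X j ω : ℤ) : ℝ) - l1)
        * (g ((∑ j, X j ω) + 1) + g (∑ j, X j ω)) / 2 ∂ℙ
      = ∑ i, ∫ ω, ((X i ω : ℝ) - p i) * ((g ((∑ j, X j ω) + 1) + g (∑ j, X j ω)) / 2) ∂ℙ := by
    rw [← MeasureTheory.integral_finset_sum univ fun i _ => intsummand i]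
    congr 1
    funext ω
    have hsplit : (((∑ j, X j ω : ℤ) : ℝ) - l1) = ∑ j, ((X j ω : ℝ) - p j) := by
      rw [hl1, Finset.sum_sub_distrib]
      push_cast
      ring
    rw [mul_div_assoc, hsplit, Finset.sum_mul]
  rw [lhseq, ← Finset.sum_add_distrib]
  exact Finset.sum_congr rfl fun i _ => key i
end

section
/- Let X_1,...,X_m be independent Bernoulli(p_i), W their sum, λ_1 = Σ p_i, q_i = 1-p_i. Then for bounded g: ℤ → ℝ, E[(W - λ_1)Δg(W)] = Σ_{i=1}^m p_i q_i E[Δ²g(W_i)], where W_i = W - X_i. -/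
/-!
Write `W = Wᵢ + Xᵢ` with `Wᵢ` independent of `Xᵢ`. Since `Xᵢ` takes only the values `0` and `1`,
`(Xᵢ - pᵢ) Δg(W) = (1 - pᵢ) Xᵢ Δg(Wᵢ + 1) - pᵢ (1 - Xᵢ) Δg(Wᵢ)`, and by independence its
expectation is `pᵢ qᵢ (E Δg(Wᵢ + 1) - E Δg(Wᵢ)) = pᵢ qᵢ E Δ²g(Wᵢ)`. Summing over `i` gives the
identity, because `W - λ₁ = ∑ᵢ (Xᵢ - pᵢ)`.
-/

open MeasureTheory ProbabilityTheory Finset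

section General

variable {Ω : Type*} [MeasurableSpace Ω] {μ : Measure Ω}

lemma integrable_comp_of_forall_abs_le [IsFiniteMeasure μ] {α : Type*} [MeasurableSpace α]
    [DiscreteMeasurableSpace α] {Y : Ω → α} (hY : Measurable Y) {f : α → ℝ} {C : ℝ}
    (hf : ∀ ω, |f (Y ω)| ≤ C) : Integrable (fun ω => f (Y ω)) μ :=
  .of_bound (Measurable.of_discrete.comp hY).aestronglyMeasurable C (ae_of_all _ hf)

lemma integrable_comp_of_bernoulli [IsFiniteMeasure μ] {B : Ω → ℤ} (hB : Measurable B)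
    (h01 : ∀ ω, B ω = 0 ∨ B ω = 1) (φ : ℤ → ℝ) : Integrable (fun ω => φ (B ω)) μ :=
  integrable_comp_of_forall_abs_le hB (C := |φ 0| + |φ 1|) fun ω => by
    rcases h01 ω with h | h <;> simp [h]

lemma exists_abs_sub_le_of_bounded {g : ℤ → ℝ} (hg : ∃ C, ∀ z, |g z| ≤ C) (k : ℤ) :
    ∃ C, ∀ z, |g (z + k) - g z| ≤ C := by
  obtain ⟨C, hC⟩ := hg
  exact ⟨2 * C, fun z => (abs_sub _ _).trans (by linarith [hC (z + k), hC z])⟩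

lemma integrable_sub_mul_of_bernoulli {B : Ω → ℤ} (hB : Measurable B)
    (h01 : ∀ ω, B ω = 0 ∨ B ω = 1) (p : ℝ) {h : Ω → ℝ} (hh : Integrable h μ) :
    Integrable (fun ω => ((B ω : ℝ) - p) * h ω) μ := by
  refine hh.bdd_mul (c := 1 + |p|) (by fun_prop) (ae_of_all _ fun ω => ?_)
  refine (abs_sub _ _).trans (add_le_add_left ?_ _)
  rcases h01 ω with hω | hω <;> simp [hω]

lemma ProbabilityTheory.iIndepFun.indepFun_sum_sub_self {ι β : Type*} [Fintype ι]
    [AddCommGroup β] [MeasurableSpace β] [MeasurableAdd₂ β] {X : ι → Ω → β}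
    (hind : iIndepFun X μ) (hmeas : ∀ i, Measurable (X i)) (i : ι) :
    IndepFun (fun ω => (∑ j, X j ω) - X i ω) (X i) μ := by
  classical
  have hrest : (fun ω => (∑ j, X j ω) - X i ω) = ∑ j ∈ univ.erase i, X j := by
    funext ω
    rw [Finset.sum_apply, ← Finset.sum_erase_add _ _ (mem_univ i), add_sub_cancel_right]
  rw [hrest]
  exact hind.indepFun_finsetSum_of_notMem hmeas (notMem_erase i univ)

end General

section Bernoulli

variable {Ω : Type*} [MeasurableSpace Ω] {μ : Measure Ω} [IsProbabilityMeasure μ]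
  {B : Ω → ℤ} {p : ℝ}

lemma integral_comp_of_bernoulli (hB : Measurable B) (h01 : ∀ ω, B ω = 0 ∨ B ω = 1)
    (hp : μ.real {ω | B ω = 1} = p) (φ : ℤ → ℝ) :
    ∫ ω, φ (B ω) ∂μ = (1 - p) * φ 0 + p * φ 1 := by
  have hs : MeasurableSet {ω | B ω = 1} := hB (measurableSet_singleton 1)
  have hφ : (fun ω => φ (B ω))
      = fun ω => φ 0 + {ω | B ω = 1}.indicator (fun _ => φ 1 - φ 0) ω := by
    funext ω
    rcases h01 ω with h | h <;> simp [h]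
  rw [hφ, integral_add (integrable_const _) ((integrable_const _).indicator hs),
    integral_indicator_const _ hs, hp]
  simp only [integral_const, probReal_univ, smul_eq_mul]
  ring

lemma integral_sub_mul_comp_add_of_bernoulli {V : Ω → ℤ} (hV : Measurable V)
    (hB : Measurable B) (hVB : IndepFun V B μ) (h01 : ∀ ω, B ω = 0 ∨ B ω = 1)
    (hp : μ.real {ω | B ω = 1} = p) {f : ℤ → ℝ} (hf : ∃ C, ∀ z, |f z| ≤ C) :
    ∫ ω, ((B ω : ℝ) - p) * f (V ω + B ω) ∂μ
      = p * (1 - p) * ∫ ω, (f (V ω + 1) - f (V ω)) ∂μ := by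
  obtain ⟨C, hC⟩ := hf
  have hfV : ∀ k : ℤ, Integrable (fun ω => f (V ω + k)) μ := fun k =>
    integrable_comp_of_forall_abs_le hV (f := fun z => f (z + k)) fun ω => hC _
  have hmul_integral (φ : ℤ → ℝ) (k : ℤ) :
      ∫ ω, φ (B ω) * f (V ω + k) ∂μ = ((1 - p) * φ 0 + p * φ 1) * ∫ ω, f (V ω + k) ∂μ := by
    rw [← integral_comp_of_bernoulli hB h01 hp φ]
    exact hVB.symm.integral_fun_comp_mul_comp (g := fun z => f (z + k)) hB.aemeasurable
      hV.aemeasurable Measurable.of_discrete.aestronglyMeasurable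
      Measurable.of_discrete.aestronglyMeasurable
  have hmul_integrable (φ : ℤ → ℝ) (k : ℤ) :
      Integrable (fun ω => φ (B ω) * f (V ω + k)) μ :=
    (hVB.symm.comp (φ := φ) (ψ := fun z => f (z + k)) Measurable.of_discrete
      Measurable.of_discrete).integrable_mul (integrable_comp_of_bernoulli hB h01 φ) (hfV k)
  -- `V ω + 0` puts both summands in the shape `φ (B ω) * f (V ω + k)` of `hmul_integral`.
  have hsplit : ∀ ω, ((B ω : ℝ) - p) * f (V ω + B ω)
      = (1 - p) * (B ω : ℝ) * f (V ω + 1) + -p * (1 - (B ω : ℝ)) * f (V ω + 0) := by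
    intro ω
    rcases h01 ω with h | h <;> simp only [h] <;> push_cast <;> ring_nf
  simp_rw [hsplit]
  rw [integral_add (hmul_integrable (fun b => (1 - p) * b) 1)
      (hmul_integrable (fun b => -p * (1 - b)) 0),
    hmul_integral (fun b => (1 - p) * b) 1, hmul_integral (fun b => -p * (1 - b)) 0,
    integral_sub (hfV 1) (by simpa using hfV 0)]
  simp only [add_zero]
  push_cast
  ring

end Bernoulli

theorem stmt_11 {Ω : Type*} [MeasureSpace Ω] [IsProbabilityMeasure (ℙ : Measure Ω)]
    (m : ℕ) (X : Fin m → Ω → ℤ) (p : Fin m → ℝ)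
    (hmeas : ∀ i, Measurable (X i))
    (hind : iIndepFun X ℙ)
    (h01 : ∀ i ω, X i ω = 0 ∨ X i ω = 1)
    (hp : ∀ i, (ℙ {ω | X i ω = 1}).toReal = p i)
    (l1 : ℝ) (hl1 : l1 = ∑ i, p i)
    (g : ℤ → ℝ) (hb : ∃ C, ∀ z, |g z| ≤ C) :
    ∫ ω, (((∑ j, X j ω : ℤ) : ℝ) - l1)
        * (g ((∑ j, X j ω) + 1) - g (∑ j, X j ω)) ∂ℙ
      = ∑ i, p i * (1 - p i) *
          ∫ ω, (g ((∑ j, X j ω) - X i ω + 2) - 2 * g ((∑ j, X j ω) - X i ω + 1)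
              + g ((∑ j, X j ω) - X i ω)) ∂ℙ := by
  have hW : Measurable fun ω => ∑ j, X j ω := by fun_prop
  have hΔg := exists_abs_sub_le_of_bounded hb 1
  have hterm (i : Fin m) :
      ∫ ω, ((X i ω : ℝ) - p i) * (g ((∑ j, X j ω) + 1) - g (∑ j, X j ω)) ∂ℙ
        = p i * (1 - p i) *
          ∫ ω, (g ((∑ j, X j ω) - X i ω + 2) - 2 * g ((∑ j, X j ω) - X i ω + 1)
              + g ((∑ j, X j ω) - X i ω)) ∂ℙ := by
    have := integral_sub_mul_comp_add_of_bernoulli (V := fun ω => (∑ j, X j ω) - X i ω)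
      (hW.sub (hmeas i)) (hmeas i) (hind.indepFun_sum_sub_self hmeas i) (h01 i) (hp i) hΔg
    simp only [sub_add_cancel] at this
    rw [this]
    congr 2
    funext ω
    ring_nf
  have hsum : ∀ ω, (((∑ j, X j ω : ℤ) : ℝ) - l1) * (g ((∑ j, X j ω) + 1) - g (∑ j, X j ω))
      = ∑ i, ((X i ω : ℝ) - p i) * (g ((∑ j, X j ω) + 1) - g (∑ j, X j ω)) := by
    intro ω
    rw [← Finset.sum_mul, Finset.sum_sub_distrib, hl1, Int.cast_sum]
  obtain ⟨D, hD⟩ := hΔg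
  have hΔgW : Integrable (fun ω => g ((∑ j, X j ω) + 1) - g (∑ j, X j ω)) ℙ :=
    integrable_comp_of_forall_abs_le hW (f := fun z => g (z + 1) - g z) fun ω => hD _
  simp_rw [hsum]
  rw [integral_finsetSum _ fun i _ => integrable_sub_mul_of_bernoulli (hmeas i) (h01 i) _ hΔgW]
  exact Finset.sum_congr rfl fun i _ => hterm i
end

section
/- Let μ = Bin(n,p) with 0 < p < 1, n ≥ 1. If f(1) = (μ(A ∩ {0}) - μ(A)μ({0}))/(q μ{1}) for A ⊆ {0,...,n}, then |f(1)| ≤ (1 - q^n)/(n p) ≤ (1 - p^{n+1} - q^{n+1})/(n p q). -/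
theorem stmt_13 (n : ℕ) (hn : 1 ≤ n) (p q : ℝ) (hp0 : 0 < p) (hp1 : p < 1)
    (hq : q = 1 - p)
    (μ : Finset ℕ → ℝ)
    (hμ : ∀ S : Finset ℕ, μ S = ∑ j ∈ S, (n.choose j : ℝ) * p ^ j * q ^ (n - j))
    (A : Finset ℕ) (hA : A ⊆ Finset.range (n + 1))
    (f1 : ℝ) (hf1 : f1 = (μ (A ∩ {0}) - μ A * μ {0}) / (q * μ {1})) :
    |f1| ≤ (1 - q ^ n) / (n * p) ∧
    (1 - q ^ n) / (n * p) ≤ (1 - p ^ (n + 1) - q ^ (n + 1)) / (n * p * q) := by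
  have hq0 : 0 < q := by rw [hq]; linarith
  have hq1 : q < 1 := by rw [hq]; linarith
  have hn0 : (0:ℝ) < n := by exact_mod_cast hn
  have hnp : (0:ℝ) < n * p := mul_pos hn0 hp0
  have hqn : 0 < q ^ n := pow_pos hq0 n
  -- μ values
  have hμ0 : μ {0} = q ^ n := by
    rw [hμ]; simp
  have hμ1 : μ {1} = n * p * q ^ (n - 1) := by
    rw [hμ]; simp [Nat.choose_one_right, mul_assoc]
  have hden : q * μ {1} = n * p * q ^ n := by
    rw [hμ1]
    have : q * q ^ (n - 1) = q ^ n := by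
      rw [← pow_succ']
      congr 1
      omega
    ring_nf
    rw [this]
  have hpq : p + q = 1 := by rw [hq]; ring
  have htot : μ (Finset.range (n + 1)) = 1 := by
    rw [hμ]
    have := add_pow p q n
    rw [hpq, one_pow] at this
    rw [this]
    apply Finset.sum_congr rfl
    intro j hj
    ring
  have hnonneg : ∀ S : Finset ℕ, 0 ≤ μ S := by
    intro S
    rw [hμ]
    apply Finset.sum_nonneg
    intro j hj
    positivity
  have hmono : ∀ S T : Finset ℕ, S ⊆ T → μ S ≤ μ T := by
    intro S T hST
    rw [hμ, hμ]
    apply Finset.sum_le_sum_of_subset_of_nonneg hST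
    intro j _ _
    positivity
  have hAle : μ A ≤ 1 := htot ▸ hmono _ _ hA
  -- key bound on numerator
  have hnum : |μ (A ∩ {0}) - μ A * μ {0}| ≤ q ^ n * (1 - q ^ n) := by
    by_cases h0 : 0 ∈ A
    · have hcap : A ∩ {0} = {0} := Finset.inter_singleton_of_mem h0
      have hge : q ^ n ≤ μ A := by
        rw [← hμ0]; exact hmono _ _ (Finset.singleton_subset_iff.mpr h0)
      rw [hcap, hμ0]
      rw [abs_of_nonneg (by nlinarith)]
      nlinarith
    · have hcap : A ∩ {0} = ∅ := by
        rw [Finset.inter_singleton_of_notMem h0]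
      have hμe : μ (∅ : Finset ℕ) = 0 := by rw [hμ]; simp
      have hAsub : A ⊆ Finset.range (n + 1) \ {0} := by
        apply Finset.subset_sdiff.mpr
        exact ⟨hA, Finset.disjoint_singleton_right.mpr h0⟩
      have hsd : μ (Finset.range (n + 1) \ {0}) = 1 - q ^ n := by
        have hsub : ({0} : Finset ℕ) ⊆ Finset.range (n + 1) := by
          simp
        have := Finset.sum_sdiff (f := fun j => (n.choose j : ℝ) * p ^ j * q ^ (n - j)) hsub
        have h1 : μ (Finset.range (n + 1) \ {0}) + μ {0} = μ (Finset.range (n + 1)) := by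
          rw [hμ, hμ, hμ]; exact this
        rw [hμ0, htot] at h1
        linarith
      have hAle' : μ A ≤ 1 - q ^ n := hsd ▸ hmono _ _ hAsub
      have hA0 : 0 ≤ μ A := hnonneg A
      rw [hcap, hμe, hμ0]
      rw [abs_of_nonpos (by nlinarith)]
      nlinarith
  constructor
  · rw [hf1, hden, abs_div, abs_of_pos (show (0:ℝ) < ↑n * p * q ^ n from mul_pos hnp hqn)]
    rw [div_le_div_iff₀ (by positivity) hnp]
    calc |μ (A ∩ {0}) - μ A * μ {0}| * (n * p)
        ≤ q ^ n * (1 - q ^ n) * (n * p) := by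
          apply mul_le_mul_of_nonneg_right hnum (le_of_lt hnp)
      _ = (1 - q ^ n) * (n * p * q ^ n) := by ring
  · rw [div_le_div_iff₀ hnp (by positivity)]
    have hpn : p ^ n ≤ 1 := pow_le_one₀ (le_of_lt hp0) (le_of_lt hp1)
    have h1 : 0 ≤ n * p * (p - p * p ^ n) := by
      apply mul_nonneg (le_of_lt hnp)
      nlinarith
    have hps : p ^ (n + 1) = p * p ^ n := by ring
    have hqs : q ^ (n + 1) = q * q ^ n := by ring
    nlinarith [hqn, hq0]
end
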